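/- Lemma 2.1(iii) (Hamiltonian conservation of the semidiscrete DG scheme): Suppose (u_h, q_h, p_h) together with numerical traces û_h, q̂_h, p̂_h satisfy the semidiscrete DG scheme with zero source, that û_h and q_h depend differentiably on t, and that for every t ∈ [0,T] the traces satisfy the condition 0 = Σ_{i=1}^N ( ⟦p_h⟧(p̂_h − {p_h}) + ε ⟦q_h⟧ ∂_t(û_h − {u_h}) + ε ∂_t⟦u_h⟧ (q̂_h − {q_h}) )(x_i). Then the discrete Hamiltonian is conserved: t ↦ Σ_{i=1}^N ∫_{I_i} ( (ε/2) q_h(x,t)² − V(u_h(x,t)) ) dx is constant on [0,T]. -/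

import Mathlib

open Polynomial Set

noncomputable section

namespace DG

/-- A broken polynomial function in `W_h^k` (before imposing the degree bound):
the polynomial indexed by `i` is the restriction of the function to
element `I_i = (x (i-1), x i)`, for `i = 1,…,N`. -/
abbrev Broken := ℕ → Polynomial ℝ

/-- Membership in `W_h^k`: every elementwise polynomial has degree at most `k`. -/
def DegLE (k : ℕ) (P : Broken) : Prop := ∀ i, (P i).natDegree ≤ k

/-- `(F, G) = Σ_{i=1}^N ∫_{I_i} F_i G_i dx` for families of functions on the elements. -/
def ip (x : ℕ → ℝ) (N : ℕ) (F G : ℕ → ℝ → ℝ) : ℝ :=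
  ∑ i ∈ Finset.Icc 1 N, ∫ y in (x (i-1))..(x i), F i y * G i y

/-- the family of real functions determined by a broken polynomial -/
def ev (P : Broken) : ℕ → ℝ → ℝ := fun i y => (P i).eval y

/-- elementwise spatial derivative -/
def dx (P : Broken) : Broken := fun i => (P i).derivative

/-- `⟨φ̂, v n⟩ = Σ_{i=1}^N [φ̂(x_i) v(x_i⁻) - φ̂(x_{i-1}) v(x_{i-1}⁺)]` where `φ̂` is a
numerical trace, i.e. a function on the node indices. -/
def bt (x : ℕ → ℝ) (N : ℕ) (φ : ℕ → ℝ) (v : Broken) : ℝ :=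
  ∑ i ∈ Finset.Icc 1 N, (φ i * (v i).eval (x i) - φ (i - 1) * (v i).eval (x (i - 1)))

/-- the one-sided limit `ζ(x_i⁻)` of a broken polynomial at the node `x_i`, `i = 1,…,N` -/
def lv (x : ℕ → ℝ) (P : Broken) (i : ℕ) : ℝ := (P i).eval (x i)

/-- the one-sided limit `ζ(x_i⁺)` at the node `x_i`, with the periodic identification
`ζ(x_N⁺) = ζ(x_0⁺)` -/
def rv (x : ℕ → ℝ) (N : ℕ) (P : Broken) (i : ℕ) : ℝ :=
  if i = N then (P 1).eval (x 0) else (P (i + 1)).eval (x i)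

/-- the jump `⟦ζ⟧(x_i) = ζ(x_i⁻) - ζ(x_i⁺)` -/
def jmp (x : ℕ → ℝ) (N : ℕ) (P : Broken) (i : ℕ) : ℝ := lv x P i - rv x N P i

/-- the average `{ζ}(x_i) = (ζ(x_i⁻) + ζ(x_i⁺))/2` -/
def avg (x : ℕ → ℝ) (N : ℕ) (P : Broken) (i : ℕ) : ℝ := (lv x P i + rv x N P i) / 2

/-- the jump `⟦g(ζ)⟧(x_i)` of a composition `g ∘ ζ` -/
def jmpC (x : ℕ → ℝ) (N : ℕ) (g : ℝ → ℝ) (P : Broken) (i : ℕ) : ℝ :=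
  g (lv x P i) - g (rv x N P i)

/-- `η(w,v) = Σ_{i=1}^N ⟦w⟧⟦v⟧(x_i)` -/
def eta (x : ℕ → ℝ) (N : ℕ) (w v : Broken) : ℝ :=
  ∑ i ∈ Finset.Icc 1 N, jmp x N w i * jmp x N v i

/-- the mesh `a = x 0 < x 1 < ⋯ < x N = b` -/
structure Mesh (a b : ℝ) (N : ℕ) (x : ℕ → ℝ) : Prop where
  hab : a < b
  hN : 1 ≤ N
  left : x 0 = a
  right : x N = b
  mono : ∀ i, i < N → x i < x (i + 1)

/-- `Pf` is the elementwise L²-projection of the function `y ↦ f(ζ(y))` onto `W_h^k`: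
it has degree at most `k` and `∫_{I_i} (Pf - f(ζ)) w = 0` for every polynomial `w` of
degree at most `k` and every element `i`. -/
def IsProj (x : ℕ → ℝ) (N k : ℕ) (f : ℝ → ℝ) (P Pf : Broken) : Prop :=
  DegLE k Pf ∧ ∀ i ∈ Finset.Icc 1 N, ∀ w : Polynomial ℝ, w.natDegree ≤ k →
    (∫ y in (x (i-1))..(x i), ((Pf i).eval y - f ((P i).eval y)) * w.eval y) = 0

/-- a numerical trace takes equal values at the nodes `x_0` and `x_N` -/
def IsTrace (N : ℕ) (φ : ℕ → ℝ) : Prop := φ 0 = φ N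

/-- The semidiscrete DG scheme with zero source on `[0,T]`: `u q p : ℝ → Broken`
are the approximations (depending differentiably on `t`, with time derivatives
`ut qt pt`), and `uh qh ph` are the (possibly `t`-dependent) numerical traces. -/
structure Scheme (x : ℕ → ℝ) (N k : ℕ) (T ε : ℝ) (f : ℝ → ℝ)
    (u q p ut qt pt : ℝ → Broken) (uh qh ph : ℝ → ℕ → ℝ) : Prop where
  degu : ∀ t ∈ Icc (0:ℝ) T, DegLE k (u t)
  degq : ∀ t ∈ Icc (0:ℝ) T, DegLE k (q t)
  degp : ∀ t ∈ Icc (0:ℝ) T, DegLE k (p t)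
  degut : ∀ t ∈ Icc (0:ℝ) T, DegLE k (ut t)
  trace_u : ∀ t ∈ Icc (0:ℝ) T, IsTrace N (uh t)
  trace_q : ∀ t ∈ Icc (0:ℝ) T, IsTrace N (qh t)
  trace_p : ∀ t ∈ Icc (0:ℝ) T, IsTrace N (ph t)
  du : ∀ t ∈ Icc (0:ℝ) T, ∀ i, ∀ y : ℝ,
    HasDerivWithinAt (fun s => ((u s) i).eval y) (((ut t) i).eval y) (Icc (0:ℝ) T) t
  dq : ∀ t ∈ Icc (0:ℝ) T, ∀ i, ∀ y : ℝ,
    HasDerivWithinAt (fun s => ((q s) i).eval y) (((qt t) i).eval y) (Icc (0:ℝ) T) t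
  dp : ∀ t ∈ Icc (0:ℝ) T, ∀ i, ∀ y : ℝ,
    HasDerivWithinAt (fun s => ((p s) i).eval y) (((pt t) i).eval y) (Icc (0:ℝ) T) t
  eq1 : ∀ t ∈ Icc (0:ℝ) T, ∀ v : Broken, DegLE k v →
    ip x N (ev (q t)) (ev v) + ip x N (ev (u t)) (ev (dx v)) - bt x N (uh t) v = 0
  eq2 : ∀ t ∈ Icc (0:ℝ) T, ∀ z : Broken, DegLE k z →
    ip x N (ev (p t)) (ev z) + ε * ip x N (ev (q t)) (ev (dx z)) - ε * bt x N (qh t) z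
      = ip x N (fun i y => f (((u t) i).eval y)) (ev z)
  eq3 : ∀ t ∈ Icc (0:ℝ) T, ∀ w : Broken, DegLE k w →
    ip x N (ev (ut t)) (ev w) - ip x N (ev (p t)) (ev (dx w)) + bt x N (ph t) w = 0

end DG

/-!
Differentiating under the integral sign, the discrete Hamiltonian `H` has derivative
`H' = ε (q, q_t) - (f(u), u_t)`. Test the time-differentiated first scheme equation with `q`,
the second with `u_t` and the third with `p`, and integrate by parts on each element: the volume
terms cancel, and since the traces agree at `x_0` and `x_N` the boundary terms regroup into jumps
and averages at the nodes, leaving exactly the sum of the trace condition, so `H' = 0`.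

Differentiation under the integral is legitimate because a polynomial of degree `≤ n` is a linear
function of its values at the nodes `0, 1, …, n`: a time-dependent broken polynomial is a
differentiable curve in a finite-dimensional space, on which the integral functionals are `C¹`.
-/

open Function Metric

theorem hasFDerivAt_intervalIntegral_of_continuous {E G : Type*} [NormedAddCommGroup E]
    [NormedSpace ℝ E] [ProperSpace E] [NormedAddCommGroup G] [NormedSpace ℝ G]
    {F : E → ℝ → G} {F' : E → ℝ → E →L[ℝ] G}
    (hF : Continuous (uncurry F)) (hF' : Continuous (uncurry F'))
    (hFF' : ∀ c y, HasFDerivAt (F · y) (F' c y) c) (a b : ℝ) (c₀ : E) :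
    HasFDerivAt (fun c => ∫ y in a..b, F c y) (∫ y in a..b, F' c₀ y) c₀ := by
  obtain ⟨M, hM⟩ := ((isCompact_closedBall c₀ 1).prod isCompact_uIcc).exists_bound_of_continuousOn
    (s := closedBall c₀ 1 ×ˢ uIcc a b) hF'.continuousOn
  exact intervalIntegral.hasFDerivAt_integral_of_dominated_of_fderiv_le (bound := fun _ => M)
    (closedBall_mem_nhds c₀ one_pos)
    (.of_forall fun c => (hF.uncurry_left c).aestronglyMeasurable)
    ((hF.uncurry_left c₀).intervalIntegrable _ _) (hF'.uncurry_left c₀).aestronglyMeasurable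
    (.of_forall fun y hy c hc => hM (c, y) ⟨hc, uIoc_subset_uIcc hy⟩) intervalIntegrable_const
    (.of_forall fun y _ c _ => hFF' c y)

theorem hasDerivWithinAt_intervalIntegral_comp_sum {ι : Type*} [Fintype ι] {ℓ : ι → ℝ → ℝ}
    (hℓ : ∀ m, Continuous (ℓ m)) {Φ φ : ℝ → ℝ → ℝ} (hΦ : Continuous (uncurry Φ))
    (hφ : Continuous (uncurry φ)) (hΦφ : ∀ z y, HasDerivAt (Φ · y) (φ z y) z)
    {c : ℝ → ι → ℝ} {c' : ι → ℝ} {S : Set ℝ} {t : ℝ} (hc : HasDerivWithinAt c c' S t)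
    (a b : ℝ) :
    HasDerivWithinAt (fun s => ∫ y in a..b, Φ (∑ m, c s m * ℓ m y) y)
      (∫ y in a..b, φ (∑ m, c t m * ℓ m y) y * ∑ m, c' m * ℓ m y) S t := by
  set L : ℝ → (ι → ℝ) →L[ℝ] ℝ := fun y => ∑ m, ℓ m y • ContinuousLinearMap.proj m
  have hL : ∀ y e, L y e = ∑ m, e m * ℓ m y := fun y e => by simp [L, mul_comm]
  have hG := hasFDerivAt_intervalIntegral_of_continuous (F := fun e y => Φ (L y e) y)
    (F' := fun e y => φ (L y e) y • L y) (by fun_prop) (by fun_prop)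
    (fun e y => (hΦφ (L y e) y).comp_hasFDerivAt e (L y).hasFDerivAt) a b (c t)
  have h := hG.comp_hasDerivWithinAt t hc
  rw [ContinuousLinearMap.intervalIntegral_apply
    ((Continuous.intervalIntegrable (by fun_prop) _ _))] at h
  simpa [hL, Function.comp_def] using h

def lagrangeNode (n : ℕ) (m : Fin (n + 1)) : ℝ[X] :=
  Lagrange.basis Finset.univ (fun j : Fin (n + 1) => (j : ℝ)) m

theorem eval_eq_sum_eval_mul_lagrangeNode {n : ℕ} {R : ℝ[X]} (hR : R.natDegree ≤ n) (y : ℝ) :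
    R.eval y = ∑ m : Fin (n + 1), R.eval (m : ℝ) * (lagrangeNode n m).eval y := by
  have hinj : Set.InjOn (fun j : Fin (n + 1) => (j : ℝ)) ↑(Finset.univ : Finset (Fin (n + 1))) :=
    (Nat.cast_injective.comp Fin.val_injective).injOn
  have hdeg : R.degree < (Finset.univ : Finset (Fin (n + 1))).card := by
    rw [Finset.card_univ, Fintype.card_fin]
    exact degree_le_natDegree.trans_lt (by exact_mod_cast Nat.lt_succ_of_le hR)
  conv_lhs => rw [Lagrange.eq_interpolate hinj hdeg, Lagrange.interpolate_apply]
  simp [eval_finsetSum, lagrangeNode]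

theorem hasDerivWithinAt_intervalIntegral_comp_eval {n : ℕ} {g : ℝ → ℝ[X]} {g' : ℝ → ℝ}
    {S : Set ℝ} {t : ℝ} (hS : UniqueDiffWithinAt ℝ S t) (ht : t ∈ S)
    (hdeg : ∀ s ∈ S, (g s).natDegree ≤ n)
    (hg : ∀ y, HasDerivWithinAt (fun s => (g s).eval y) (g' y) S t)
    {Φ φ : ℝ → ℝ → ℝ} (hΦ : Continuous (uncurry Φ)) (hφ : Continuous (uncurry φ))
    (hΦφ : ∀ z y, HasDerivAt (Φ · y) (φ z y) z) (a b : ℝ) :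
    HasDerivWithinAt (fun s => ∫ y in a..b, Φ ((g s).eval y) y)
      (∫ y in a..b, φ ((g t).eval y) y * g' y) S t := by
  have hrep : ∀ s ∈ S, ∀ y,
      (g s).eval y = ∑ m : Fin (n + 1), (g s).eval (m : ℝ) * (lagrangeNode n m).eval y :=
    fun s hs => eval_eq_sum_eval_mul_lagrangeNode (hdeg s hs)
  -- `g'` is the derivative of the right-hand side of `hrep`, hence has the same form
  have hrep' : ∀ y, g' y = ∑ m : Fin (n + 1), g' m * (lagrangeNode n m).eval y := fun y =>
    hS.eq_deriv _ (hg y) <| (HasDerivWithinAt.fun_sum fun (m : Fin (n + 1)) _ =>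
      (hg m).mul_const ((lagrangeNode n m).eval y)).congr (fun s hs => hrep s hs y) (hrep t ht y)
  refine (hasDerivWithinAt_intervalIntegral_comp_sum (fun m => (lagrangeNode n m).continuous)
    hΦ hφ hΦφ (hasDerivWithinAt_pi.2 fun m : Fin (n + 1) => hg m) a b).congr
    (fun s hs => by simp only [← hrep s hs]) (by simp only [← hrep t ht]) |>.congr_deriv ?_
  simp only [← hrep t ht, ← hrep']

theorem Finset.sum_Icc_pred_eq_of_eq {M : Type*} [AddCommMonoid M] {N : ℕ} {Ψ : ℕ → M}
    (hΨ : Ψ 0 = Ψ N) : ∑ i ∈ Finset.Icc 1 N, Ψ (i - 1) = ∑ i ∈ Finset.Icc 1 N, Ψ i := by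
  simp only [← Finset.Ico_add_one_right_eq_Icc, Finset.sum_Ico_eq_sum_range,
    add_tsub_cancel_right, add_tsub_cancel_left]
  cases N with
  | zero => simp
  | succ m => rw [Finset.sum_range_succ', Finset.sum_range_succ, hΨ, add_comm]; simp [add_comm]

namespace DG

variable {x : ℕ → ℝ} {N : ℕ}

theorem eval_pred_eq_rv {P : Broken} {i : ℕ} (hi : i ∈ Finset.Icc 1 N) :
    (P i).eval (x (i - 1)) = rv x N P (i - 1) := by
  rw [Finset.mem_Icc] at hi
  rw [rv, if_neg (by omega), Nat.sub_add_cancel hi.1]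

theorem rv_zero (hN : 1 ≤ N) (P : Broken) : rv x N P 0 = rv x N P N := by
  rw [rv, rv, if_neg (by omega), if_pos rfl]

theorem bt_eq_sum_mul_jmp (hN : 1 ≤ N) {φ : ℕ → ℝ} (hφ : IsTrace N φ) (v : Broken) :
    bt x N φ v = ∑ i ∈ Finset.Icc 1 N, φ i * jmp x N v i := by
  calc bt x N φ v
      = ∑ i ∈ Finset.Icc 1 N, (φ i * lv x v i - φ (i - 1) * rv x N v (i - 1)) :=
        Finset.sum_congr rfl fun i hi => by rw [eval_pred_eq_rv hi, lv]
    _ = ∑ i ∈ Finset.Icc 1 N, φ i * lv x v i - ∑ i ∈ Finset.Icc 1 N, φ i * rv x N v i := by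
        rw [Finset.sum_sub_distrib, Finset.sum_Icc_pred_eq_of_eq (Ψ := fun j => φ j * rv x N v j)
          (by rw [rv_zero hN, hφ])]
    _ = ∑ i ∈ Finset.Icc 1 N, φ i * jmp x N v i := by
        simp only [← Finset.sum_sub_distrib, jmp, mul_sub]

theorem ip_comm (F G : ℕ → ℝ → ℝ) : ip x N F G = ip x N G F :=
  Finset.sum_congr rfl fun _ _ => intervalIntegral.integral_congr fun _ _ => mul_comm _ _

theorem ip_dx_add_ip_dx (hN : 1 ≤ N) (P Q : Broken) :
    ip x N (ev (dx P)) (ev Q) + ip x N (ev P) (ev (dx Q))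
      = ∑ i ∈ Finset.Icc 1 N, (jmp x N P i * avg x N Q i + avg x N P i * jmp x N Q i) := by
  calc ip x N (ev (dx P)) (ev Q) + ip x N (ev P) (ev (dx Q))
      = ∑ i ∈ Finset.Icc 1 N,
          (lv x P i * lv x Q i - rv x N P (i - 1) * rv x N Q (i - 1)) := by
        simp only [ip, ev, dx, ← Finset.sum_add_distrib]
        refine Finset.sum_congr rfl fun i hi => ?_
        rw [← intervalIntegral.integral_add (Continuous.intervalIntegrable (by fun_prop) _ _)
            (Continuous.intervalIntegrable (by fun_prop) _ _),
          intervalIntegral.integral_deriv_mul_eq_sub (fun y _ => (P i).hasDerivAt y)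
            (fun y _ => (Q i).hasDerivAt y) (Continuous.intervalIntegrable (by fun_prop) _ _)
            (Continuous.intervalIntegrable (by fun_prop) _ _),
          eval_pred_eq_rv hi, eval_pred_eq_rv hi, lv, lv]
    _ = ∑ i ∈ Finset.Icc 1 N, (lv x P i * lv x Q i - rv x N P i * rv x N Q i) := by
        rw [Finset.sum_sub_distrib, Finset.sum_sub_distrib,
          Finset.sum_Icc_pred_eq_of_eq (Ψ := fun j => rv x N P j * rv x N Q j)
            (by rw [rv_zero hN, rv_zero hN])]
    _ = _ := Finset.sum_congr rfl fun i _ => by simp only [jmp, avg]; ring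

theorem energy_identity (hN : 1 ≤ N) {ε : ℝ} {F : ℕ → ℝ → ℝ} {q p ut qt : Broken}
    {uht qh ph : ℕ → ℝ} (huht : IsTrace N uht) (hqh : IsTrace N qh) (hph : IsTrace N ph)
    (h₁ : ip x N (ev qt) (ev q) + ip x N (ev ut) (ev (dx q)) - bt x N uht q = 0)
    (h₂ : ip x N (ev p) (ev ut) + ε * ip x N (ev q) (ev (dx ut)) - ε * bt x N qh ut
      = ip x N F (ev ut))
    (h₃ : ip x N (ev ut) (ev p) - ip x N (ev p) (ev (dx p)) + bt x N ph p = 0) :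
    ε * ip x N (ev q) (ev qt) - ip x N F (ev ut)
      = ∑ i ∈ Finset.Icc 1 N,
          (jmp x N p i * (ph i - avg x N p i) + ε * jmp x N q i * (uht i - avg x N ut i)
            + ε * jmp x N ut i * (qh i - avg x N q i)) := by
  have hq := ip_dx_add_ip_dx (x := x) hN q ut
  have hp := ip_dx_add_ip_dx (x := x) hN p p
  rw [ip_comm (ev (dx p))] at hp
  rw [ip_comm (ev (dx q))] at hq
  rw [bt_eq_sum_mul_jmp hN huht] at h₁
  rw [bt_eq_sum_mul_jmp hN hqh] at h₂
  rw [bt_eq_sum_mul_jmp hN hph] at h₃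
  have hsum : ε * ip x N (ev q) (ev qt) - ip x N F (ev ut)
      = ε * (∑ i ∈ Finset.Icc 1 N, uht i * jmp x N q i)
        + ε * (∑ i ∈ Finset.Icc 1 N, qh i * jmp x N ut i)
        + ∑ i ∈ Finset.Icc 1 N, ph i * jmp x N p i
        - ε * ∑ i ∈ Finset.Icc 1 N, (jmp x N q i * avg x N ut i + avg x N q i * jmp x N ut i)
        - (∑ i ∈ Finset.Icc 1 N, (jmp x N p i * avg x N p i + avg x N p i * jmp x N p i)) / 2 := by
    linear_combination ε * h₁ - ε * ip_comm (x := x) (N := N) (ev qt) (ev q) + h₂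
      - ip_comm (x := x) (N := N) (ev p) (ev ut) - h₃ - ε * hq - hp / 2
  rw [hsum, Finset.mul_sum, Finset.mul_sum, Finset.mul_sum, Finset.sum_div,
    ← Finset.sum_add_distrib, ← Finset.sum_add_distrib, ← Finset.sum_sub_distrib,
    ← Finset.sum_sub_distrib]
  exact Finset.sum_congr rfl fun i _ => by ring

def hamiltonian (x : ℕ → ℝ) (N : ℕ) (ε : ℝ) (V : ℝ → ℝ) (u q : Broken) : ℝ :=
  ∑ i ∈ Finset.Icc 1 N, ∫ y in (x (i-1))..(x i), ((ε/2) * (q i).eval y ^ 2 - V ((u i).eval y))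

section TimeDerivative

variable {S : Set ℝ} {t : ℝ}

theorem IsTrace.of_hasDerivWithinAt {φ : ℝ → ℕ → ℝ} {φ' : ℕ → ℝ}
    (hS : UniqueDiffWithinAt ℝ S t) (ht : t ∈ S) (hφ : ∀ s ∈ S, IsTrace N (φ s))
    (hφ' : ∀ i, HasDerivWithinAt (fun s => φ s i) (φ' i) S t) : IsTrace N φ' :=
  hS.eq_deriv _ (hφ' 0) ((hφ' N).congr (fun s hs => hφ s hs) (hφ t ht))

theorem hasDerivWithinAt_bt {φ : ℝ → ℕ → ℝ} {φ' : ℕ → ℝ}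
    (hφ' : ∀ i, HasDerivWithinAt (fun s => φ s i) (φ' i) S t) (v : Broken) :
    HasDerivWithinAt (fun s => bt x N (φ s) v) (bt x N φ' v) S t :=
  HasDerivWithinAt.fun_sum fun i _ => ((hφ' i).mul_const _).sub ((hφ' (i - 1)).mul_const _)

variable {n : ℕ} {g : ℝ → Broken} {g' : Broken}

theorem hasDerivWithinAt_sum_integral (hS : UniqueDiffWithinAt ℝ S t) (ht : t ∈ S)
    (hdeg : ∀ s ∈ S, DegLE n (g s))
    (hg : ∀ i y, HasDerivWithinAt (fun s => (g s i).eval y) ((g' i).eval y) S t)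
    {Φ φ : ℕ → ℝ → ℝ → ℝ} (hΦ : ∀ i, Continuous (uncurry (Φ i)))
    (hφ : ∀ i, Continuous (uncurry (φ i))) (hΦφ : ∀ i z y, HasDerivAt (Φ i · y) (φ i z y) z) :
    HasDerivWithinAt
      (fun s => ∑ i ∈ Finset.Icc 1 N, ∫ y in (x (i-1))..(x i), Φ i ((g s i).eval y) y)
      (∑ i ∈ Finset.Icc 1 N, ∫ y in (x (i-1))..(x i), φ i ((g t i).eval y) y * (g' i).eval y)
      S t :=
  HasDerivWithinAt.fun_sum fun i _ => hasDerivWithinAt_intervalIntegral_comp_eval hS ht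
    (fun s hs => hdeg s hs i) (hg i) (hΦ i) (hφ i) (hΦφ i) _ _

theorem hasDerivWithinAt_ip (hS : UniqueDiffWithinAt ℝ S t) (ht : t ∈ S)
    (hdeg : ∀ s ∈ S, DegLE n (g s))
    (hg : ∀ i y, HasDerivWithinAt (fun s => (g s i).eval y) ((g' i).eval y) S t) (w : Broken) :
    HasDerivWithinAt (fun s => ip x N (ev (g s)) (ev w)) (ip x N (ev g') (ev w)) S t :=
  (hasDerivWithinAt_sum_integral hS ht hdeg hg (Φ := fun i z y => z * (w i).eval y)
    (φ := fun i _ y => (w i).eval y) (fun _ => by fun_prop) (fun _ => by fun_prop)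
    (fun _ _ _ => hasDerivAt_mul_const _)).congr_deriv <|
      Finset.sum_congr rfl fun _ _ => intervalIntegral.integral_congr fun _ _ => mul_comm _ _

theorem hasDerivWithinAt_hamiltonian {ε : ℝ} {f V : ℝ → ℝ} (hf : Continuous f)
    (hV : ∀ z, HasDerivAt V (f z) z) {u q : ℝ → Broken} {u' q' : Broken}
    (hS : UniqueDiffWithinAt ℝ S t) (ht : t ∈ S)
    (hu : ∀ s ∈ S, DegLE n (u s)) (hq : ∀ s ∈ S, DegLE n (q s))
    (hu' : ∀ i y, HasDerivWithinAt (fun s => (u s i).eval y) ((u' i).eval y) S t)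
    (hq' : ∀ i y, HasDerivWithinAt (fun s => (q s i).eval y) ((q' i).eval y) S t) :
    HasDerivWithinAt (fun s => hamiltonian x N ε V (u s) (q s))
      (ε * ip x N (ev (q t)) (ev q') - ip x N (fun i y => f ((u t i).eval y)) (ev u')) S t := by
  have hVc : Continuous V := continuous_iff_continuousAt.2 fun z => (hV z).continuousAt
  have hsplit : ∀ s, hamiltonian x N ε V (u s) (q s)
      = (∑ i ∈ Finset.Icc 1 N, ∫ y in (x (i-1))..(x i), ε / 2 * (q s i).eval y ^ 2)
        - ∑ i ∈ Finset.Icc 1 N, ∫ y in (x (i-1))..(x i), V ((u s i).eval y) := fun s => by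
    rw [hamiltonian, ← Finset.sum_sub_distrib]
    exact Finset.sum_congr rfl fun i _ => intervalIntegral.integral_sub
      (Continuous.intervalIntegrable (by fun_prop) _ _)
      (Continuous.intervalIntegrable (by fun_prop) _ _)
  have hQ := hasDerivWithinAt_sum_integral (x := x) (N := N) hS ht hq hq'
    (Φ := fun _ z _ => ε / 2 * z ^ 2) (φ := fun _ z _ => ε * z) (fun _ => by fun_prop)
    (fun _ => by fun_prop) fun _ z _ => by
      simpa [mul_assoc, ← mul_assoc (ε / 2)] using (hasDerivAt_pow 2 z).const_mul (ε / 2)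
  have hU := hasDerivWithinAt_sum_integral (x := x) (N := N) hS ht hu hu'
    (Φ := fun _ z _ => V z) (φ := fun _ z _ => f z) (fun _ => by fun_prop)
    (fun _ => by fun_prop) fun _ z _ => hV z
  refine ((hQ.fun_sub hU).congr (fun s _ => hsplit s) (hsplit t)).congr_deriv ?_
  simp only [ip, ev, Finset.mul_sum, ← intervalIntegral.integral_const_mul, mul_assoc]

end TimeDerivative

theorem Scheme.eq1_hasDerivWithinAt {k : ℕ} {T ε : ℝ} {f : ℝ → ℝ} {u q p ut qt pt : ℝ → Broken}
    {uh qh ph uht : ℝ → ℕ → ℝ} (hS : Scheme x N k T ε f u q p ut qt pt uh qh ph) (hT : 0 < T)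
    (hduh : ∀ t ∈ Icc (0:ℝ) T, ∀ i,
      HasDerivWithinAt (fun s => uh s i) (uht t i) (Icc (0:ℝ) T) t)
    {t : ℝ} (ht : t ∈ Icc (0:ℝ) T) (v : Broken) (hv : DegLE k v) :
    ip x N (ev (qt t)) (ev v) + ip x N (ev (ut t)) (ev (dx v)) - bt x N (uht t) v = 0 := by
  have hU := uniqueDiffOn_Icc hT t ht
  have hlhs := ((hasDerivWithinAt_ip (x := x) (N := N) hU ht hS.degq (hS.dq t ht) v).add
    (hasDerivWithinAt_ip (x := x) (N := N) hU ht hS.degu (hS.du t ht) (dx v))).sub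
    (hasDerivWithinAt_bt (x := x) (N := N) (hduh t ht) v)
  exact hU.eq_deriv _ hlhs
    ((hasDerivWithinAt_const t _ 0).congr (fun s hs => hS.eq1 s hs v hv) (hS.eq1 t ht v hv))

end DG

/-- Lemma 2.1(iii): Hamiltonian conservation of the semidiscrete DG scheme with zero
source, assuming the trace `û_h` depends differentiably on `t` (with derivative `uht`;
differentiability of `q_h` is part of the scheme) and the trace condition (2.8). -/
theorem dg_hamiltonian_conservation
    (a b : ℝ) (N k : ℕ) (x : ℕ → ℝ) (hmesh : DG.Mesh a b N x)
    (T ε : ℝ) (hT : 0 < T) (f V : ℝ → ℝ) (hf : Continuous f)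
    (hV : ∀ y : ℝ, HasDerivAt V (f y) y)
    (u q p ut qt pt : ℝ → DG.Broken) (uh qh ph : ℝ → ℕ → ℝ)
    (hS : DG.Scheme x N k T ε f u q p ut qt pt uh qh ph)
    (uht : ℝ → ℕ → ℝ)
    (hduh : ∀ t ∈ Set.Icc (0:ℝ) T, ∀ i,
      HasDerivWithinAt (fun s => uh s i) (uht t i) (Set.Icc (0:ℝ) T) t)
    (hcond : ∀ t ∈ Set.Icc (0:ℝ) T,
      0 = ∑ i ∈ Finset.Icc 1 N,
        (DG.jmp x N (p t) i * (ph t i - DG.avg x N (p t) i)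
          + ε * DG.jmp x N (q t) i * (uht t i - DG.avg x N (ut t) i)
          + ε * DG.jmp x N (ut t) i * (qh t i - DG.avg x N (q t) i))) :
    ∀ t₁ ∈ Set.Icc (0:ℝ) T, ∀ t₂ ∈ Set.Icc (0:ℝ) T,
      (∑ i ∈ Finset.Icc 1 N, ∫ y in (x (i-1))..(x i),
          ((ε/2) * ((q t₁) i).eval y ^ 2 - V (((u t₁) i).eval y)))
        = ∑ i ∈ Finset.Icc 1 N, ∫ y in (x (i-1))..(x i),
            ((ε/2) * ((q t₂) i).eval y ^ 2 - V (((u t₂) i).eval y)) := by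
  have hH : ∀ t ∈ Icc (0:ℝ) T,
      HasDerivWithinAt (fun s => DG.hamiltonian x N ε V (u s) (q s)) 0 (Icc 0 T) t := by
    intro t ht
    have hU := uniqueDiffOn_Icc hT t ht
    refine (DG.hasDerivWithinAt_hamiltonian hf hV hU ht hS.degu hS.degq (hS.du t ht)
      (hS.dq t ht)).congr_deriv ?_
    rw [DG.energy_identity hmesh.hN (DG.IsTrace.of_hasDerivWithinAt hU ht hS.trace_u (hduh t ht))
      (hS.trace_q t ht) (hS.trace_p t ht) (hS.eq1_hasDerivWithinAt hT hduh ht _ (hS.degq t ht))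
      (hS.eq2 t ht _ (hS.degut t ht)) (hS.eq3 t ht _ (hS.degp t ht)), hcond t ht]
  intro t₁ ht₁ t₂ ht₂
  show DG.hamiltonian x N ε V (u t₁) (q t₁) = DG.hamiltonian x N ε V (u t₂) (q t₂)
  have h := (convex_Icc (0:ℝ) T).norm_image_sub_le_of_norm_hasDerivWithin_le hH
    (fun _ _ => le_of_eq norm_zero) ht₁ ht₂
  simpa [sub_eq_zero, eq_comm] using h
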